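/- arXiv:0803.0023 — 2 statements merged into one kernel-verified Lean document; each statement's English description precedes it below -/
import Mathlib

section
/- Let n ≥ 2. For Ψ = (α, β) ∈ ℂⁿ ⊕ ℂⁿ, define μ₀(Ψ) to be the 2×2 block matrix with blocks (1/2)(αα* − ββ*)₀, (αβ*)₀, (βα*)₀, (1/2)(ββ* − αα*)₀, where (·)₀ denotes the trace-free part of an n×n matrix. If μ₀(Ψ) = 0 then Ψ = 0. -/
open Matrix BigOperators

/-- The rank-one endomorphism `vw* : ξ ↦ ⟨w,ξ⟩·v` of `ℂⁿ`, as a matrix: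
`(vw*)ᵢⱼ = vᵢ · conj(wⱼ)`. -/
def outerPr {n : ℕ} (v w : Fin n → ℂ) : Matrix (Fin n) (Fin n) ℂ :=
  Matrix.vecMulVec v (star w)

/-- Trace-free part `(A)₀ = A − (1/n)·tr(A)·I` of an `n×n` complex matrix. -/
noncomputable def traceFree {n : ℕ} (A : Matrix (Fin n) (Fin n) ℂ) :
    Matrix (Fin n) (Fin n) ℂ :=
  A - ((1 / (n : ℂ)) * A.trace) • (1 : Matrix (Fin n) (Fin n) ℂ)

lemma rank1_smul (n : ℕ) (hn : 2 ≤ n) (v w : Fin n → ℂ) (t : ℂ)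
    (h : Matrix.vecMulVec v w = t • (1 : Matrix (Fin n) (Fin n) ℂ)) :
    ∀ i j, v i * w j = 0 := by
  have he : ∀ i j, v i * w j = t * (if i = j then 1 else 0) := by
    intro i j
    have := congrFun (congrFun h i) j
    simpa [Matrix.vecMulVec, Matrix.one_apply, Matrix.smul_apply] using this
  have hab : (⟨0, by omega⟩ : Fin n) ≠ (⟨1, by omega⟩ : Fin n) := by
    simp [Fin.ext_iff]
  have h1 := he ⟨0, by omega⟩ ⟨0, by omega⟩
  have h2 := he ⟨1, by omega⟩ ⟨1, by omega⟩
  have h3 := he ⟨0, by omega⟩ ⟨1, by omega⟩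
  have h4 := he ⟨1, by omega⟩ ⟨0, by omega⟩
  rw [if_pos rfl] at h1 h2
  rw [if_neg hab] at h3
  rw [if_neg hab.symm] at h4
  have ht : t = 0 := by
    have : t * t = 0 := by
      calc t * t = (v ⟨0, by omega⟩ * w ⟨0, by omega⟩) * (v ⟨1, by omega⟩ * w ⟨1, by omega⟩) := by
            rw [h1, h2]; ring
        _ = (v ⟨0, by omega⟩ * w ⟨1, by omega⟩) * (v ⟨1, by omega⟩ * w ⟨0, by omega⟩) := by ring
        _ = 0 := by rw [h3, h4]; ring
    exact mul_self_eq_zero.mp this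
  intro i j
  rcases eq_or_ne i j with rfl | hij
  · simpa [ht] using he i i
  · simpa [hij] using he i j

lemma traceFree_eq_zero {n : ℕ} {A : Matrix (Fin n) (Fin n) ℂ}
    (h : traceFree A = 0) :
    A = ((1 / (n : ℂ)) * A.trace) • (1 : Matrix (Fin n) (Fin n) ℂ) := by
  have := sub_eq_zero.mp h
  exact this

/-- For `Ψ = (α, β) ∈ ℂⁿ ⊕ ℂⁿ` with `n ≥ 2`, if the block matrix
`μ₀(Ψ) = [[(1/2)(αα*−ββ*)₀, (αβ*)₀],[(βα*)₀, (1/2)(ββ*−αα*)₀]]` vanishes, then `Ψ = 0`. -/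
theorem stmt1 (n : ℕ) (hn : 2 ≤ n) (α β : Fin n → ℂ)
    (h : Matrix.fromBlocks
        (((1 : ℂ)/2) • traceFree (outerPr α α - outerPr β β))
        (traceFree (outerPr α β))
        (traceFree (outerPr β α))
        (((1 : ℂ)/2) • traceFree (outerPr β β - outerPr α α)) = 0) :
    α = 0 ∧ β = 0 := by
  -- extract blocks
  have h11 : ((1 : ℂ)/2) • traceFree (outerPr α α - outerPr β β) = 0 := by
    ext i j
    have := congrFun (congrFun h (Sum.inl i)) (Sum.inl j)
    simpa [Matrix.fromBlocks] using this
  have h12 : traceFree (outerPr α β) = 0 := by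
    ext i j
    have := congrFun (congrFun h (Sum.inl i)) (Sum.inr j)
    simpa [Matrix.fromBlocks] using this
  have h11' : traceFree (outerPr α α - outerPr β β) = 0 := by
    have h2 : ((1 : ℂ)/2) ≠ 0 := by norm_num
    rcases smul_eq_zero.mp h11 with h' | h'
    · exact absurd h' h2
    · exact h'
  have hX := traceFree_eq_zero h11'
  have hαβ : ∀ i j, α i * (starRingEnd ℂ) (β j) = 0 := by
    have := traceFree_eq_zero h12
    intro i j
    have := rank1_smul n hn α (star β) _ this i j
    simpa using this
  have key : α = 0 ∨ β = 0 := by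
    by_cases hA : α = 0
    · exact Or.inl hA
    · right
      obtain ⟨i, hi⟩ := Function.ne_iff.mp hA
      funext j
      have := hαβ i j
      rcases mul_eq_zero.mp this with h' | h'
      · exact absurd h' hi
      · simpa using congrArg (starRingEnd ℂ) h'
  set s : ℂ := (1 / (n : ℂ)) * (outerPr α α - outerPr β β).trace with hs
  rcases key with hA | hB
  · -- α = 0, show β = 0
    refine ⟨hA, ?_⟩
    have hββ : Matrix.vecMulVec β (star β) = (-s) • (1 : Matrix (Fin n) (Fin n) ℂ) := by
      have h0 : outerPr α α = 0 := by
        simp [outerPr, hA, Matrix.vecMulVec]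
        ext i j; simp
      have : (0 : Matrix (Fin n) (Fin n) ℂ) - outerPr β β = s • 1 := by
        rw [← h0]; exact hX
      have : outerPr β β = (-s) • (1 : Matrix (Fin n) (Fin n) ℂ) := by
        rw [neg_smul, ← this]; abel
      simpa [outerPr] using this
    funext i
    have := rank1_smul n hn β (star β) _ hββ i i
    have : β i * (starRingEnd ℂ) (β i) = 0 := by simpa using this
    rw [Complex.mul_conj] at this
    simpa using Complex.normSq_eq_zero.mp (by exact_mod_cast this)
  · -- β = 0, show α = 0
    have hαα : Matrix.vecMulVec α (star α) = s • (1 : Matrix (Fin n) (Fin n) ℂ) := by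
      have h0 : outerPr β β = 0 := by
        simp [outerPr, hB, Matrix.vecMulVec]
        ext i j; simp
      have : outerPr α α - 0 = s • 1 := by rw [← h0]; exact hX
      simpa [outerPr] using this
    have hα : α = 0 := by
      funext i
      have := rank1_smul n hn α (star α) _ hαα i i
      have : α i * (starRingEnd ℂ) (α i) = 0 := by simpa using this
      rw [Complex.mul_conj] at this
      simpa using Complex.normSq_eq_zero.mp (by exact_mod_cast this)
    exact ⟨hα, hB⟩
end

section
/- Let n ≥ 2. Define μ₀ : ℂⁿ ⊕ ℂⁿ → End(ℂⁿ ⊕ ℂⁿ) by μ₀(α,β) = the block matrix [[(1/2)(αα* − ββ*)₀, (αβ*)₀],[(βα*)₀, (1/2)(ββ* − αα*)₀]]. Then there exists a constant c > 0 such that ‖μ₀(Ψ)‖ ≥ c·‖Ψ‖² for all Ψ ∈ ℂⁿ ⊕ ℂⁿ, where ‖μ₀(Ψ)‖ is the Frobenius (Hilbert–Schmidt) norm. -/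
/-!
With `a = ‖α‖²`, `b = ‖β‖²` and `s = |⟨α, β⟩|²`, the Frobenius norm of `μ₀(α, β)` can be
computed exactly: removing the trace costs `|tr A|² / n`, and rank-one matrices satisfy
`‖vw*‖² = ‖v‖²‖w‖²`, `⟨vv*, ww*⟩ = |⟨v, w⟩|²`. This gives
`‖μ₀‖² = (a² + b² - 2s - (a - b)²/n)/2 + 2(ab - s/n)`, and for `n ≥ 2` Cauchy–Schwarz
`s ≤ ab` bounds it below by `(a + b)²/4`, so `c = 1/2` works.
-/

open Matrix BigOperators

/-- Frobenius (Hilbert–Schmidt) norm `‖A‖ = √(∑ᵢⱼ |Aᵢⱼ|²) = √(tr(A*A))`. -/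
noncomputable def frobNorm {m : Type*} [Fintype m] (A : Matrix m m ℂ) : ℝ :=
  Real.sqrt (∑ i, ∑ j, ‖A i j‖ ^ 2)

/-- The quadratic map `μ₀(α,β)` as a block matrix. -/
noncomputable def mu0 {n : ℕ} (α β : Fin n → ℂ) :
    Matrix (Fin n ⊕ Fin n) (Fin n ⊕ Fin n) ℂ :=
  Matrix.fromBlocks
    (((1 : ℂ)/2) • traceFree (outerPr α α - outerPr β β))
    (traceFree (outerPr α β))
    (traceFree (outerPr β α))
    (((1 : ℂ)/2) • traceFree (outerPr β β - outerPr α α))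

open Complex Finset

section Frobenius

variable {m k : Type*} [Fintype m] [Fintype k]

noncomputable def frobSq (A : Matrix m k ℂ) : ℝ := ∑ i, ∑ j, ‖A i j‖ ^ 2

def frobInner (A B : Matrix m k ℂ) : ℂ := ∑ i, ∑ j, A i j * star (B i j)

lemma frobSq_sub (A B : Matrix m k ℂ) :
    frobSq (A - B) = frobSq A + frobSq B - 2 * (frobInner A B).re := by
  simp only [frobSq, frobInner, Matrix.sub_apply, Complex.sq_norm, normSq_sub, sum_add_distrib,
    sum_sub_distrib, re_sum, ← mul_sum, Complex.star_def]

lemma frobSq_smul (c : ℂ) (A : Matrix m k ℂ) : frobSq (c • A) = ‖c‖ ^ 2 * frobSq A := by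
  simp only [frobSq, Matrix.smul_apply, smul_eq_mul, norm_mul, mul_pow, ← mul_sum]

lemma frobSq_fromBlocks {m' k' : Type*} [Fintype m'] [Fintype k'] (A : Matrix m k ℂ)
    (B : Matrix m k' ℂ) (C : Matrix m' k ℂ) (D : Matrix m' k' ℂ) :
    frobSq (fromBlocks A B C D) = frobSq A + frobSq B + frobSq C + frobSq D := by
  simp only [frobSq, Fintype.sum_sum_type, fromBlocks_apply₁₁, fromBlocks_apply₁₂,
    fromBlocks_apply₂₁, fromBlocks_apply₂₂, sum_add_distrib]
  ring

lemma frobNorm_eq_sqrt_frobSq (A : Matrix m m ℂ) : frobNorm A = √(frobSq A) := rfl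

end Frobenius

section SquareMatrix

variable {m : Type*} [Fintype m] [DecidableEq m]

lemma frobSq_smul_one (c : ℂ) : frobSq (c • (1 : Matrix m m ℂ)) = ‖c‖ ^ 2 * Fintype.card m := by
  simp [frobSq, one_apply, apply_ite, mul_comm]

lemma frobInner_smul_one (A : Matrix m m ℂ) (c : ℂ) :
    frobInner A (c • 1) = A.trace * star c := by
  simp [frobInner, one_apply, apply_ite, trace, sum_mul]

end SquareMatrix

lemma frobSq_traceFree {n : ℕ} (A : Matrix (Fin n) (Fin n) ℂ) :
    frobSq (traceFree A) = frobSq A - ‖A.trace‖ ^ 2 / n := by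
  rcases Nat.eq_zero_or_pos n with rfl | hn
  · simp [traceFree]
  rw [traceFree, frobSq_sub, frobSq_smul_one, frobInner_smul_one, Fintype.card_fin]
  have : A.trace * star (1 / (n : ℂ) * A.trace) = ((‖A.trace‖ ^ 2 / n : ℝ) : ℂ) := by
    rw [star_mul', Complex.star_def, mul_left_comm, mul_conj']
    simp [div_eq_inv_mul]
  rw [this, ofReal_re, norm_mul, norm_div, norm_one, Complex.norm_natCast]
  field_simp
  ring

section OuterProduct

variable {n : ℕ}

lemma frobSq_outerPr (v w : Fin n → ℂ) :
    frobSq (outerPr v w) = (∑ i, ‖v i‖ ^ 2) * ∑ j, ‖w j‖ ^ 2 := by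
  simp only [frobSq, outerPr, vecMulVec_apply, Pi.star_apply, norm_mul, norm_star, mul_pow,
    ← mul_sum, ← sum_mul]

lemma frobInner_outerPr (v w x y : Fin n → ℂ) :
    frobInner (outerPr v w) (outerPr x y) = (v ⬝ᵥ star x) * (y ⬝ᵥ star w) := by
  simp only [frobInner, outerPr, vecMulVec_apply, Pi.star_apply, dotProduct, sum_mul_sum,
    star_mul', star_star]
  refine sum_congr rfl fun i _ => sum_congr rfl fun j _ => by ring

lemma trace_outerPr (v w : Fin n → ℂ) : (outerPr v w).trace = v ⬝ᵥ star w :=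
  trace_vecMulVec v (star w)

lemma dotProduct_star_self_eq_ofReal (v : Fin n → ℂ) :
    v ⬝ᵥ star v = ((∑ i, ‖v i‖ ^ 2 : ℝ) : ℂ) := by
  simp [dotProduct, mul_conj']

lemma norm_dotProduct_star_sq_le (v w : Fin n → ℂ) :
    ‖v ⬝ᵥ star w‖ ^ 2 ≤ (∑ i, ‖v i‖ ^ 2) * ∑ i, ‖w i‖ ^ 2 := by
  have h := norm_inner_le_norm (𝕜 := ℂ) (WithLp.toLp 2 w) (WithLp.toLp 2 v)
  rw [EuclideanSpace.inner_toLp_toLp] at h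
  rw [← EuclideanSpace.norm_sq_eq (WithLp.toLp 2 v), ← EuclideanSpace.norm_sq_eq (WithLp.toLp 2 w),
    ← mul_pow]
  exact pow_le_pow_left₀ (norm_nonneg _) (h.trans_eq (mul_comm _ _)) 2

lemma norm_dotProduct_star_comm (v w : Fin n → ℂ) : ‖w ⬝ᵥ star v‖ = ‖v ⬝ᵥ star w‖ := by
  rw [dotProduct_star, norm_star]

lemma frobSq_outerPr_sub_outerPr (v w : Fin n → ℂ) :
    frobSq (outerPr v v - outerPr w w)
      = (∑ i, ‖v i‖ ^ 2) ^ 2 + (∑ i, ‖w i‖ ^ 2) ^ 2 - 2 * ‖v ⬝ᵥ star w‖ ^ 2 := by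
  have h : frobInner (outerPr v v) (outerPr w w) = ((‖v ⬝ᵥ star w‖ ^ 2 : ℝ) : ℂ) := by
    rw [frobInner_outerPr, dotProduct_star w v, Complex.star_def, mul_conj']
    push_cast
    rfl
  rw [frobSq_sub, frobSq_outerPr, frobSq_outerPr, h, ofReal_re]
  ring

lemma frobSq_traceFree_outerPr_sub_outerPr (v w : Fin n → ℂ) :
    frobSq (traceFree (outerPr v v - outerPr w w))
      = (∑ i, ‖v i‖ ^ 2) ^ 2 + (∑ i, ‖w i‖ ^ 2) ^ 2 - 2 * ‖v ⬝ᵥ star w‖ ^ 2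
        - ((∑ i, ‖v i‖ ^ 2) - ∑ i, ‖w i‖ ^ 2) ^ 2 / n := by
  rw [frobSq_traceFree, frobSq_outerPr_sub_outerPr, trace_sub, trace_outerPr, trace_outerPr,
    dotProduct_star_self_eq_ofReal, dotProduct_star_self_eq_ofReal, ← ofReal_sub, norm_real,
    Real.norm_eq_abs, sq_abs]

lemma frobSq_traceFree_outerPr (v w : Fin n → ℂ) :
    frobSq (traceFree (outerPr v w))
      = (∑ i, ‖v i‖ ^ 2) * (∑ i, ‖w i‖ ^ 2) - ‖v ⬝ᵥ star w‖ ^ 2 / n := by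
  rw [frobSq_traceFree, frobSq_outerPr, trace_outerPr]

end OuterProduct

lemma frobSq_mu0 {n : ℕ} (α β : Fin n → ℂ) :
    frobSq (mu0 α β)
      = ((∑ i, ‖α i‖ ^ 2) ^ 2 + (∑ i, ‖β i‖ ^ 2) ^ 2 - 2 * ‖α ⬝ᵥ star β‖ ^ 2
          - ((∑ i, ‖α i‖ ^ 2) - ∑ i, ‖β i‖ ^ 2) ^ 2 / n) / 2
        + 2 * ((∑ i, ‖α i‖ ^ 2) * (∑ i, ‖β i‖ ^ 2) - ‖α ⬝ᵥ star β‖ ^ 2 / n) := by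
  rw [mu0, frobSq_fromBlocks, frobSq_smul, frobSq_smul, frobSq_traceFree_outerPr_sub_outerPr,
    frobSq_traceFree_outerPr_sub_outerPr, frobSq_traceFree_outerPr, frobSq_traceFree_outerPr,
    norm_dotProduct_star_comm, show ‖(1 : ℂ) / 2‖ ^ 2 = 1 / 4 by norm_num]
  ring

lemma sq_add_le_four_mul_frobSq_mu0 {n : ℕ} (hn : 2 ≤ n) (α β : Fin n → ℂ) :
    ((∑ i, ‖α i‖ ^ 2) + ∑ i, ‖β i‖ ^ 2) ^ 2 ≤ 4 * frobSq (mu0 α β) := by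
  have hcs := norm_dotProduct_star_sq_le α β
  set a := ∑ i, ‖α i‖ ^ 2
  set b := ∑ i, ‖β i‖ ^ 2
  set s := ‖α ⬝ᵥ star β‖ ^ 2
  have hs : 0 ≤ s := by positivity
  have hn' : (2 : ℝ) ≤ n := by exact_mod_cast hn
  have h1 : (a - b) ^ 2 / n ≤ (a - b) ^ 2 / 2 :=
    div_le_div_of_nonneg_left (sq_nonneg _) two_pos hn'
  have h2 : s / n ≤ s / 2 := div_le_div_of_nonneg_left hs two_pos hn'
  rw [frobSq_mu0]
  linarith

/-- for `n ≥ 2` there is `c > 0` with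
`‖μ₀(Ψ)‖ ≥ c·‖Ψ‖²` for all `Ψ = (α,β) ∈ ℂⁿ ⊕ ℂⁿ` (Frobenius norm). -/
theorem stmt2 (n : ℕ) (hn : 2 ≤ n) :
    ∃ c : ℝ, 0 < c ∧ ∀ α β : Fin n → ℂ,
      c * ((∑ i, ‖α i‖ ^ 2) + ∑ i, ‖β i‖ ^ 2) ≤ frobNorm (mu0 α β) := by
  refine ⟨1 / 2, one_half_pos, fun α β => ?_⟩
  rw [frobNorm_eq_sqrt_frobSq]
  apply Real.le_sqrt_of_sq_le
  linarith [sq_add_le_four_mul_frobSq_mu0 hn α β]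
end
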